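/- arXiv:2602.15311 — 2 statements merged into one kernel-verified Lean document; each statement's English description precedes it below -/
import Mathlib

section
/- For every string T = T[1..n] and every i ∈ [1..n]: if X_i ≠ ∅ then LRS[i] = i − min(X_i) + 1 = |X_i|, and if X_i = ∅ then LRS[i] = 0. In particular LRS[i] = |X_i| for all i. -/
/-!
Call `T[j..j+ℓ-1]` *previously occurring* if it also occurs at some position before `j`.
This property is closed under shortening the factor at its right end (prefixes) and
under moving its left end to the right (suffixes). The first closure makes `j ∈ X_i`
equivalent to `T[j..i]` previously occurring; since a suffix of `T[1..i]` occurs twice in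
`T[1..i]` iff it occurs before its final position, the second makes `ℓ ≤ LRS[i]` equivalent
to `T[i-ℓ+1..i]` previously occurring. Hence `X_i` is exactly the interval
`[i+1-LRS[i], i]`, whose minimum and cardinality give the claim.
-/

variable {α : Type*}

/-- `occursAt T S p`: the string `S` occurs at the 1-based position `p` in `T`,
i.e. `1 ≤ p ≤ |T| − |S| + 1` and `T[p..p+|S|−1] = S`. -/
def occursAt (T S : List α) (p : ℕ) : Prop :=
  1 ≤ p ∧ p + S.length ≤ T.length + 1 ∧ (T.drop (p - 1)).take S.length = S

/-- `#occ_T(S)`: the number of positions at which `S` occurs in `T`. -/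
noncomputable def occCount (T S : List α) : ℕ :=
  {p : ℕ | occursAt T S p}.ncard

/-- `sub T i ℓ = T[i..i+ℓ−1]` (1-based substring of length `ℓ` starting at `i`). -/
def sub (T : List α) (i ℓ : ℕ) : List α := (T.drop (i - 1)).take ℓ

/-- Longest previous factor array (1-based): `LPF T i` is the largest `ℓ ≥ 0` such that
the prefix `T[i..i+ℓ−1]` of `T[i..n]` also occurs at some position `j < i` in `T`. -/
noncomputable def LPF (T : List α) (i : ℕ) : ℕ :=
  @Nat.findGreatest
    (fun ℓ => (i - 1) + ℓ ≤ T.length ∧ ∃ j, 1 ≤ j ∧ j < i ∧ occursAt T (sub T i ℓ) j)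
    (Classical.decPred _) T.length

/-- Longest repeating suffix array (1-based): `LRS T i` is the length of the longest
suffix of `T[1..i]` occurring at least twice in `T[1..i]`. -/
noncomputable def LRS (T : List α) (i : ℕ) : ℕ :=
  @Nat.findGreatest
    (fun ℓ => 2 ≤ occCount (T.take i) ((T.take i).drop (i - ℓ)))
    (Classical.decPred _) i

/-- `Xset T i = { j : 1 ≤ j ≤ i and j + LPF[j] − 1 ≥ i }`. -/
def Xset (T : List α) (i : ℕ) : Set ℕ :=
  {j | 1 ≤ j ∧ j ≤ i ∧ i ≤ j + LPF T j - 1}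

def PrevOccurs (T : List α) (j ℓ : ℕ) : Prop :=
  ∃ q, 1 ≤ q ∧ q < j ∧ occursAt T (sub T j ℓ) q

-- The instance is an implicit argument so that it unifies with the `Classical.decPred`
-- fixed in the definitions of `LPF` and `LRS`.
lemma Nat.le_findGreatest_iff_of_antitone {P : ℕ → Prop} {_ : DecidablePred P} {m n : ℕ}
    (hP : ∀ a b, 1 ≤ a → a ≤ b → b ≤ n → P b → P a) (hm : 1 ≤ m) (hmn : m ≤ n) :
    m ≤ Nat.findGreatest P n ↔ P m := by
  refine ⟨fun h => ?_, Nat.le_findGreatest hmn⟩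
  have hpos : 0 < Nat.findGreatest P n := by omega
  obtain ⟨k, -, hkn, hk⟩ := Nat.findGreatest_pos.1 hpos
  exact hP m _ hm h (Nat.findGreatest_le n) (Nat.findGreatest_spec hkn hk)

lemma setOf_occursAt_finite (T S : List α) : {p : ℕ | occursAt T S p}.Finite :=
  (Set.finite_Icc 1 (T.length + 1)).subset fun p hp =>
    Set.mem_Icc.2 ⟨hp.1, by have := hp.2.1; omega⟩

lemma occursAt_take_iff {T S : List α} {i p : ℕ} (hi : i ≤ T.length) (hp1 : 1 ≤ p)
    (hp : p + S.length ≤ i + 1) : occursAt (T.take i) S p ↔ occursAt T S p := by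
  unfold occursAt
  rw [List.drop_take, List.take_take, List.length_take,
    show min S.length (i - (p - 1)) = S.length by omega]
  constructor <;> rintro ⟨a, b, c⟩ <;> exact ⟨a, by omega, c⟩

lemma occursAt.take {T S : List α} {p : ℕ} (k : ℕ) (h : occursAt T S p) :
    occursAt T (S.take k) p := by
  obtain ⟨h1, h2, h3⟩ := h
  refine ⟨h1, ?_, ?_⟩
  · rw [List.length_take]; omega
  · rw [List.length_take]
    conv_rhs => rw [← h3]
    rw [List.take_take]

lemma occursAt.drop {T S : List α} {p k : ℕ} (hk : k ≤ S.length) (h : occursAt T S p) :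
    occursAt T (S.drop k) (p + k) := by
  obtain ⟨h1, h2, h3⟩ := h
  refine ⟨by omega, ?_, ?_⟩
  · rw [List.length_drop]; omega
  · rw [List.length_drop, show p + k - 1 = p - 1 + k by omega, ← List.drop_drop]
    conv_rhs => rw [← h3]
    rw [List.drop_take]

lemma length_sub {T : List α} {j ℓ : ℕ} (h : j - 1 + ℓ ≤ T.length) :
    (sub T j ℓ).length = ℓ := by
  simp only [sub, List.length_take, List.length_drop]; omega

lemma occursAt_sub_self {T : List α} {j ℓ : ℕ} (hj : 1 ≤ j) (h : j - 1 + ℓ ≤ T.length) :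
    occursAt T (sub T j ℓ) j :=
  ⟨hj, by rw [length_sub h]; omega, by rw [length_sub h]; rfl⟩

namespace PrevOccurs

lemma of_le {T : List α} {j ℓ ℓ' : ℕ} (h : PrevOccurs T j ℓ) (hℓ : ℓ' ≤ ℓ) :
    PrevOccurs T j ℓ' := by
  obtain ⟨q, hq1, hqj, hocc⟩ := h
  refine ⟨q, hq1, hqj, ?_⟩
  have hsub : sub T j ℓ' = (sub T j ℓ).take ℓ' := by
    rw [sub, sub, List.take_take, min_eq_left hℓ]
  exact hsub ▸ hocc.take ℓ'

lemma shift {T : List α} {j ℓ k : ℕ} (h : PrevOccurs T j (ℓ + k))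
    (hfit : j - 1 + ℓ + k ≤ T.length) : PrevOccurs T (j + k) ℓ := by
  obtain ⟨q, hq1, hqj, hocc⟩ := h
  have hsub : (sub T j (ℓ + k)).drop k = sub T (j + k) ℓ := by
    rw [sub, sub, List.drop_take, List.drop_drop, Nat.add_sub_cancel,
      show j + k - 1 = j - 1 + k by omega]
  refine ⟨q + k, by omega, by omega, hsub ▸ hocc.drop ?_⟩
  rw [length_sub (by omega)]
  omega

end PrevOccurs

lemma le_LPF_iff {T : List α} {j ℓ : ℕ} (hℓ : 1 ≤ ℓ) (hfit : j - 1 + ℓ ≤ T.length) :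
    ℓ ≤ LPF T j ↔ PrevOccurs T j ℓ := by
  rw [LPF, Nat.le_findGreatest_iff_of_antitone _ hℓ (by omega)]
  · exact and_iff_right hfit
  · exact fun a b _ hab _ ⟨hb, hprev⟩ => ⟨by omega, PrevOccurs.of_le hprev hab⟩

lemma two_le_occCount_suffix_iff {T : List α} {i ℓ : ℕ} (hℓ : 1 ≤ ℓ) (hℓi : ℓ ≤ i)
    (hi : i ≤ T.length) :
    2 ≤ occCount (T.take i) ((T.take i).drop (i - ℓ)) ↔ PrevOccurs T (i - ℓ + 1) ℓ := by
  set j := i - ℓ + 1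
  have hfit : j - 1 + ℓ ≤ T.length := by omega
  have hsuffix : (T.take i).drop (i - ℓ) = sub T j ℓ := by
    rw [List.drop_take, sub]
    congr 1; omega
  have htake : ∀ {p}, 1 ≤ p → p ≤ j →
      (occursAt (T.take i) (sub T j ℓ) p ↔ occursAt T (sub T j ℓ) p) :=
    fun hp1 hp => occursAt_take_iff hi hp1 (by rw [length_sub hfit]; omega)
  have hbound : ∀ {p}, occursAt (T.take i) (sub T j ℓ) p → p ≤ j := fun hp => by
    have := hp.2.1
    rw [List.length_take, length_sub hfit] at this
    omega
  rw [hsuffix, occCount]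
  change 1 < _ ↔ _
  rw [Set.one_lt_ncard (setOf_occursAt_finite _ _)]
  constructor
  · rintro ⟨a, ha, b, hb, hab⟩
    rcases Nat.lt_or_gt_of_ne hab with hlt | hlt
    · exact ⟨a, ha.1, by have := hbound hb; omega, (htake ha.1 (hbound ha)).1 ha⟩
    · exact ⟨b, hb.1, by have := hbound ha; omega, (htake hb.1 (hbound hb)).1 hb⟩
  · rintro ⟨p, hp1, hpj, hocc⟩
    exact ⟨p, (htake hp1 hpj.le).2 hocc, j,
      (htake (by omega) le_rfl).2 (occursAt_sub_self (by omega) hfit),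
      hpj.ne⟩

lemma le_LRS_iff {T : List α} {i ℓ : ℕ} (hℓ : 1 ≤ ℓ) (hℓi : ℓ ≤ i) (hi : i ≤ T.length) :
    ℓ ≤ LRS T i ↔ PrevOccurs T (i - ℓ + 1) ℓ := by
  rw [LRS, Nat.le_findGreatest_iff_of_antitone _ hℓ hℓi, two_le_occCount_suffix_iff hℓ hℓi hi]
  intro a b ha hab hb hQ
  rw [two_le_occCount_suffix_iff (by omega) hb hi] at hQ
  rw [two_le_occCount_suffix_iff ha (by omega) hi]
  have hQ' : PrevOccurs T (i - b + 1) (a + (b - a)) := by rwa [Nat.add_sub_cancel' hab]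
  have := hQ'.shift (by omega)
  rwa [show i - b + 1 + (b - a) = i - a + 1 by omega] at this

lemma LRS_le_self (T : List α) (i : ℕ) : LRS T i ≤ i :=
  @Nat.findGreatest_le _ (Classical.decPred _) i

lemma Xset_eq_Icc {T : List α} {i : ℕ} (hi : i ≤ T.length) :
    Xset T i = Set.Icc (i + 1 - LRS T i) i := by
  have hLRS := LRS_le_self T i
  have key : ∀ j, 1 ≤ j → j ≤ i → (i - j + 1 ≤ LPF T j ↔ i - j + 1 ≤ LRS T i) :=
    fun j hj1 hji => by
      rw [le_LPF_iff (by omega) (by omega), le_LRS_iff (by omega) (by omega) hi,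
        show i - (i - j + 1) + 1 = j by omega]
  ext j
  simp only [Xset, Set.mem_ofPred_eq, Set.mem_Icc]
  constructor
  · rintro ⟨hj1, hji, hLPF⟩
    have := (key j hj1 hji).1 (by omega)
    omega
  · rintro ⟨hj, hji⟩
    have := (key j (by omega) hji).2 (by omega)
    exact ⟨by omega, hji, by omega⟩

theorem lrs_eq_xset_card_general (T : List α) (i : ℕ) (h2 : i ≤ T.length) :
    ((Xset T i).Nonempty →
      LRS T i = i - sInf (Xset T i) + 1 ∧ LRS T i = (Xset T i).ncard) ∧
    (Xset T i = ∅ → LRS T i = 0) ∧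
    LRS T i = (Xset T i).ncard := by
  have hLRS := LRS_le_self T i
  have hcard : LRS T i = (Xset T i).ncard := by
    rw [Xset_eq_Icc h2, Set.ncard_Icc_nat]
    omega
  refine ⟨fun hne => ⟨?_, hcard⟩, fun hempty => by rw [hcard, hempty, Set.ncard_empty], hcard⟩
  rw [Xset_eq_Icc h2] at hne ⊢
  have hle := Set.nonempty_Icc.1 hne
  rw [csInf_Icc hle]
  omega

/-- if `X_i ≠ ∅` then `LRS[i] = i − min(X_i) + 1 = |X_i|`, and if `X_i = ∅`
then `LRS[i] = 0`; in particular `LRS[i] = |X_i|` for all `i`. -/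
theorem lrs_eq_xset_card (T : List α) (i : ℕ) (h1 : 1 ≤ i) (h2 : i ≤ T.length) :
    ((Xset T i).Nonempty →
      LRS T i = i - sInf (Xset T i) + 1 ∧ LRS T i = (Xset T i).ncard) ∧
    (Xset T i = ∅ → LRS T i = 0) ∧
    LRS T i = (Xset T i).ncard :=
  lrs_eq_xset_card_general T i h2
end

section
/- Irreducible LPF intervals cannot be nested inside earlier LPF intervals: for every string T = T[1..n] and positions 1 ≤ i < i' ≤ n, if position i' is irreducible (i.e., LPF[i'] ≥ LPF[i'−1]), then i' + LPF[i'] ≥ i + LPF[i] + 1; in particular the interval [i'..i'+LPF[i']−1] is not properly contained in the interval [i..i+LPF[i]−1]. -/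
variable {α : Type*}

/- Dropping the first character of a previous factor at `i` and of its earlier occurrence at
`j < i` gives a previous factor at `i + 1` (occurring at `j + 1`), so `LPF[i+1] ≥ LPF[i] − 1`,
i.e. `i ↦ i + LPF[i]` is monotone. Chaining this from `i` to `i' − 1`
and using irreducibility at `i'` gives `i + LPF[i] ≤ i' − 1 + LPF[i']`. -/

theorem occursAt.tail {T S : List α} {p : ℕ} (h : occursAt T S p) (hS : S ≠ []) :
    occursAt T S.tail (p + 1) := by
  obtain ⟨hp, hlen, htake⟩ := h
  have hpos : 0 < S.length := List.length_pos_iff.mpr hS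
  refine ⟨by omega, by rw [List.length_tail]; omega, ?_⟩
  have := congrArg List.tail htake
  rw [← List.drop_one, List.drop_take, List.drop_drop, Nat.sub_add_cancel hp] at this
  rwa [List.length_tail, Nat.add_sub_cancel]

theorem sub_tail (T : List α) {i : ℕ} (hi : 1 ≤ i) (ℓ : ℕ) :
    (sub T i (ℓ + 1)).tail = sub T (i + 1) ℓ := by
  rw [sub, sub, ← List.drop_one, List.drop_take, List.drop_drop, Nat.add_sub_cancel,
    Nat.sub_add_cancel hi, Nat.add_sub_cancel]

def IsPrevFactor (T : List α) (i ℓ : ℕ) : Prop :=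
  (i - 1) + ℓ ≤ T.length ∧ ∃ j, 1 ≤ j ∧ j < i ∧ occursAt T (sub T i ℓ) j

theorem IsPrevFactor.succ {T : List α} {i ℓ : ℕ} (h : IsPrevFactor T i (ℓ + 1)) :
    IsPrevFactor T (i + 1) ℓ := by
  obtain ⟨hlen, j, hj, hji, hocc⟩ := h
  have hne : sub T i (ℓ + 1) ≠ [] := by
    rw [← List.length_pos_iff, sub, List.length_take, List.length_drop]
    omega
  refine ⟨by omega, j + 1, by omega, by omega, ?_⟩
  rw [← sub_tail T (by omega)]
  exact hocc.tail hne

theorem LPF_spec (T : List α) {i : ℕ} (h : LPF T i ≠ 0) : IsPrevFactor T i (LPF T i) :=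
  @Nat.findGreatest_of_ne_zero _ _ (Classical.decPred _) _ rfl h

theorem le_LPF {T : List α} {i ℓ : ℕ} (hℓ : ℓ ≤ T.length) (h : IsPrevFactor T i ℓ) :
    ℓ ≤ LPF T i :=
  @Nat.le_findGreatest _ _ (Classical.decPred _) _ hℓ h

theorem LPF_le_LPF_succ_add_one (T : List α) (i : ℕ) : LPF T i ≤ LPF T (i + 1) + 1 := by
  cases hℓ : LPF T i with
  | zero => exact Nat.zero_le _
  | succ ℓ =>
    have h := LPF_spec T (i := i) (by omega)
    rw [hℓ] at h
    have hsucc : ℓ ≤ LPF T (i + 1) := le_LPF (by have := h.1; omega) h.succ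
    omega

theorem monotone_add_LPF (T : List α) : Monotone fun i => i + LPF T i :=
  monotone_nat_of_le_succ fun i => by
    have := LPF_le_LPF_succ_add_one T i
    omega

theorem irreducible_lpf_not_nested_general (T : List α) (i i' : ℕ)
    (h2 : i < i')
    (hirr : LPF T (i' - 1) ≤ LPF T i') :
    i + LPF T i + 1 ≤ i' + LPF T i' := by
  have := monotone_add_LPF T (Nat.le_sub_one_of_lt h2)
  dsimp only at this
  omega

/-- irreducible LPF intervals cannot be nested inside earlier LPF intervals:
for `1 ≤ i < i' ≤ n`, if `i'` is irreducible (`LPF[i'] ≥ LPF[i'−1]`), then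
`i' + LPF[i'] ≥ i + LPF[i] + 1`. -/
theorem irreducible_lpf_not_nested (T : List α) (i i' : ℕ)
    (h1 : 1 ≤ i) (h2 : i < i') (h3 : i' ≤ T.length)
    (hirr : LPF T (i' - 1) ≤ LPF T i') :
    i + LPF T i + 1 ≤ i' + LPF T i' :=
  irreducible_lpf_not_nested_general T i i' h2 hirr
end
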